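/- arXiv:2506.14359 — 2 statements merged into one kernel-verified Lean document; each statement's English description precedes it below -/
import Mathlib

section
/- For every Young diagram λ: the Laurent polynomials T_λ, t1∂_{t1}T_λ and t2∂_{t2}T_λ in ℤ[t1^{±1},t2^{±1}] have zero constant term, and in ℚ(u1,u2) the following hold: ê(−T_λ) = ∏_{□∈λ} ( [t1^{−ℓ(□)}t2^{a(□)+1}]·[t1^{ℓ(□)+1}t2^{−a(□)}] )^{−1}; ê(−t1∂_{t1}T_λ) = ∏_{□∈λ} [t1^{−ℓ(□)}t2^{a(□)+1}]^{ℓ(□)} · [t1^{ℓ(□)+1}t2^{−a(□)}]^{−ℓ(□)−1}; ê(−t2∂_{t2}T_λ) = ∏_{□∈λ} [t1^{ℓ(□)+1}t2^{−a(□)}]^{a(□)} · [t1^{−ℓ(□)}t2^{a(□)+1}]^{−a(□)−1}. -/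
/-!
STATEMENT 1: For every Young diagram λ: T_λ, t1∂_{t1}T_λ, t2∂_{t2}T_λ have zero
constant term, and in ℚ(u1,u2) (with t_i = u_i², [t1^{w1}t2^{w2}] = u1^{w1}u2^{w2} −
u1^{−w1}u2^{−w2}) the stated product formulas for ê(−T_λ), ê(−t1∂_{t1}T_λ),
ê(−t2∂_{t2}T_λ) hold.
We model ℤ[t1^{±1},t2^{±1}] as `AddMonoidAlgebra ℤ (ℤ × ℤ)` and ℚ(u1,u2) as the
fraction field of `MvPolynomial (Fin 2) ℚ`. For a Laurent polynomial V with zero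
constant term, ê(V) := ∏_{w ∈ supp V} [t^w]^{V w}; note ê(−V) = ê(V)⁻¹ automatically.
-/

open Finset

/-- The Laurent polynomial ring ℤ[t1^{±1}, t2^{±1}]. -/
abbrev Laurent2 : Type := AddMonoidAlgebra ℤ (ℤ × ℤ)

/-- The monomial t1^{w1}·t2^{w2}. -/
noncomputable def T2 (w : ℤ × ℤ) : Laurent2 := AddMonoidAlgebra.single w 1

/-- The field ℚ(u1, u2) of rational functions in two variables. -/
abbrev K2 : Type := FractionRing (MvPolynomial (Fin 2) ℚ)

/-- The variable u_i ∈ ℚ(u1,u2). -/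
noncomputable def uu (i : Fin 2) : K2 :=
  algebraMap (MvPolynomial (Fin 2) ℚ) K2 (MvPolynomial.X i)

/-- The symmetrised bracket [t1^{w1}t2^{w2}] = u1^{w1}u2^{w2} − u1^{−w1}u2^{−w2}. -/
noncomputable def br (w : ℤ × ℤ) : K2 :=
  uu 0 ^ w.1 * uu 1 ^ w.2 - uu 0 ^ (-w.1) * uu 1 ^ (-w.2)

/-- ê(V) = ∏_{w ∈ supp V} [t^w]^{c_w} for V = Σ c_w t^w (with zero constant term);
in particular `ehat (-V) = (ehat V)⁻¹`. -/
noncomputable def ehat (V : Laurent2) : K2 :=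
  ∏ w ∈ V.coeff.support, br w ^ (V.coeff w)

/-- The derivation t1·∂/∂t1, sending t1^{w1}t2^{w2} to w1·t1^{w1}t2^{w2}. -/
noncomputable def dt1 (V : Laurent2) : Laurent2 :=
  ∑ w ∈ V.coeff.support, AddMonoidAlgebra.single w (w.1 * V.coeff w)

/-- The derivation t2·∂/∂t2, sending t1^{w1}t2^{w2} to w2·t1^{w1}t2^{w2}. -/
noncomputable def dt2 (V : Laurent2) : Laurent2 :=
  ∑ w ∈ V.coeff.support, AddMonoidAlgebra.single w (w.2 * V.coeff w)

/-- Arm length a(□). -/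
def armLength (μ : YoungDiagram) (c : ℕ × ℕ) : ℕ :=
  (μ.cells.filter fun d => d.1 = c.1 ∧ c.2 < d.2).card

/-- Leg length ℓ(□). -/
def legLength (μ : YoungDiagram) (c : ℕ × ℕ) : ℕ :=
  (μ.cells.filter fun d => d.2 = c.2 ∧ c.1 < d.1).card

/-- Z_λ = Σ_{(i,j)∈λ} t1^{−i}·t2^{−j}. -/
noncomputable def Zof (μ : YoungDiagram) : Laurent2 :=
  ∑ c ∈ μ.cells, T2 (-(c.1 : ℤ), -(c.2 : ℤ))

/-- Z̄_λ = Σ_{(i,j)∈λ} t1^{i}·t2^{j}. -/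
noncomputable def Zbarof (μ : YoungDiagram) : Laurent2 :=
  ∑ c ∈ μ.cells, T2 ((c.1 : ℤ), (c.2 : ℤ))

/-- T_λ = Z_λ + t1t2·Z̄_λ − (1−t1)(1−t2)·Z_λ·Z̄_λ. -/
noncomputable def Tlam (μ : YoungDiagram) : Laurent2 :=
  Zof μ + T2 (1, 1) * Zbarof μ
    - (1 - T2 (1, 0)) * (1 - T2 (0, 1)) * (Zof μ * Zbarof μ)

-- basics
lemma T2_mul (a b : ℤ × ℤ) : T2 a * T2 b = T2 (a + b) := by
  simp [T2, AddMonoidAlgebra.single_mul_single]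

lemma T2_zero : T2 0 = 1 := rfl

lemma uu_ne_zero (i : Fin 2) : uu i ≠ 0 := by
  simp only [uu, ne_eq, map_eq_zero_iff _ (IsFractionRing.injective (MvPolynomial (Fin 2) ℚ) K2)]
  exact MvPolynomial.X_ne_zero i


lemma mono_eq_one {a b : ℤ} (h : uu 0 ^ a * uu 1 ^ b = 1) : a = 0 ∧ b = 0 := by
  have h0 := uu_ne_zero 0
  have h1 := uu_ne_zero 1
  have e : ∀ (u : K2), u ≠ 0 → ∀ c : ℤ, u ^ ((c.toNat : ℤ)) = u ^ c * u ^ (((-c).toNat : ℤ)) := by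
    intro u hu c
    rw [← zpow_add₀ hu]
    congr 1
    omega
  have key : uu 0 ^ (a.toNat) * uu 1 ^ (b.toNat) = uu 0 ^ ((-a).toNat) * uu 1 ^ ((-b).toNat) := by
    rw [← zpow_natCast (uu 0), ← zpow_natCast (uu 0), ← zpow_natCast (uu 1), ← zpow_natCast (uu 1)]
    calc uu 0 ^ ((a.toNat : ℤ)) * uu 1 ^ ((b.toNat : ℤ))
        = (uu 0 ^ a * uu 1 ^ b) * (uu 0 ^ (((-a).toNat : ℤ)) * uu 1 ^ (((-b).toNat : ℤ))) := by
          rw [e _ h0 a, e _ h1 b]; ring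
      _ = uu 0 ^ (((-a).toNat : ℤ)) * uu 1 ^ (((-b).toNat : ℤ)) := by rw [h, one_mul]
  -- transfer to polynomials
  have inj := IsFractionRing.injective (MvPolynomial (Fin 2) ℚ) K2
  have hpoly : (MvPolynomial.X 0 : MvPolynomial (Fin 2) ℚ) ^ a.toNat * MvPolynomial.X 1 ^ b.toNat
      = MvPolynomial.X 0 ^ (-a).toNat * MvPolynomial.X 1 ^ (-b).toNat := by
    apply inj
    simpa [uu, map_mul, map_pow] using key
  rw [MvPolynomial.X_pow_eq_monomial, MvPolynomial.X_pow_eq_monomial,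
      MvPolynomial.X_pow_eq_monomial, MvPolynomial.X_pow_eq_monomial,
      MvPolynomial.monomial_mul, MvPolynomial.monomial_mul] at hpoly
  rw [MvPolynomial.monomial_eq_monomial_iff] at hpoly
  rcases hpoly with ⟨he, -⟩ | ⟨h1', -⟩
  · have e0 := congrArg (fun f => f 0) he
    have e1 := congrArg (fun f => f 1) he
    simp [Finsupp.single_apply] at e0 e1
    constructor <;> omega
  · norm_num at h1'

lemma br_ne_zero {w : ℤ × ℤ} (h : w ≠ 0) : br w ≠ 0 := by
  intro h0
  have h0' : uu 0 ^ w.1 * uu 1 ^ w.2 = uu 0 ^ (-w.1) * uu 1 ^ (-w.2) := by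
    rw [br, sub_eq_zero] at h0; exact h0
  have hu0 := uu_ne_zero 0
  have hu1 := uu_ne_zero 1
  have key : uu 0 ^ (2 * w.1) * uu 1 ^ (2 * w.2) = 1 := by
    calc uu 0 ^ (2 * w.1) * uu 1 ^ (2 * w.2)
        = (uu 0 ^ w.1 * uu 1 ^ w.2) * (uu 0 ^ w.1 * uu 1 ^ w.2) := by
          rw [two_mul, two_mul, zpow_add₀ hu0, zpow_add₀ hu1]; ring
      _ = (uu 0 ^ (-w.1) * uu 1 ^ (-w.2)) * (uu 0 ^ w.1 * uu 1 ^ w.2) := by rw [h0']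
      _ = 1 := by
          rw [mul_mul_mul_comm, ← zpow_add₀ hu0, ← zpow_add₀ hu1]
          simp
  obtain ⟨ha, hb⟩ := mono_eq_one key
  apply h
  ext <;> simp only [Prod.fst_zero, Prod.snd_zero] <;> omega


lemma ehat_eq_prod (V : Laurent2) (t : Finset (ℤ × ℤ)) (ht : V.coeff.support ⊆ t) :
    ehat V = ∏ w ∈ t, br w ^ (V.coeff w) := by
  rw [ehat]
  apply Finset.prod_subset ht
  intro w _ hw
  rw [Finsupp.notMem_support_iff.mp hw, zpow_zero]

lemma zpow_finset_sum {ι : Type*} {a : K2} (ha : a ≠ 0) (s : Finset ι) (f : ι → ℤ) :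
    a ^ (∑ c ∈ s, f c) = ∏ c ∈ s, a ^ f c := by
  classical
  induction s using Finset.induction with
  | empty => simp
  | insert x s' hx ih =>
                    rw [Finset.sum_insert hx, Finset.prod_insert hx, zpow_add₀ ha, ih]

lemma ehat_sum {ι : Type*} [DecidableEq ι] (s : Finset ι) (g : ι → ℤ × ℤ) (f : ι → ℤ)
    (hg : ∀ c ∈ s, g c ≠ 0) :
    ehat (∑ c ∈ s, AddMonoidAlgebra.single (g c) (f c)) = ∏ c ∈ s, br (g c) ^ f c := by
  classical
  set V : Laurent2 := ∑ c ∈ s, AddMonoidAlgebra.single (g c) (f c) with hV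
  have hsupp : V.coeff.support ⊆ s.image g := by
    rw [hV, AddMonoidAlgebra.coeff_sum]
    refine Finsupp.support_finset_sum.trans ?_
    intro w hw
    rw [Finset.mem_biUnion] at hw
    obtain ⟨c, hc, hw⟩ := hw
    have := Finsupp.support_single_subset hw
    rw [Finset.mem_singleton] at this
    subst this
    exact Finset.mem_image_of_mem g hc
  rw [ehat_eq_prod V _ hsupp]
  have hv : ∀ w, V.coeff w = ∑ c ∈ s.filter (fun c => g c = w), f c := by
    intro w
    rw [hV, AddMonoidAlgebra.coeff_sum, Finset.sum_apply', Finset.sum_filter]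
    exact Finset.sum_congr rfl fun c _ => by rw [AddMonoidAlgebra.coeff_single_apply]
  calc ∏ w ∈ s.image g, br w ^ (V.coeff w)
      = ∏ w ∈ s.image g, ∏ c ∈ s.filter (fun c => g c = w), br (g c) ^ f c := by
        refine Finset.prod_congr rfl fun w hw => ?_
        obtain ⟨c0, hc0, rfl⟩ := Finset.mem_image.mp hw
        rw [hv, zpow_finset_sum (br_ne_zero (hg c0 hc0))]
        exact Finset.prod_congr rfl fun c hc => by rw [(Finset.mem_filter.mp hc).2]
    _ = ∏ c ∈ s, br (g c) ^ f c :=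
        Finset.prod_fiberwise_of_maps_to (fun c hc => Finset.mem_image_of_mem g hc) _

lemma ehat_neg (V : Laurent2) : ehat (-V) = (ehat V)⁻¹ := by
  rw [ehat, ehat, AddMonoidAlgebra.coeff_neg, Finsupp.support_neg, ← Finset.prod_inv_distrib]
  exact Finset.prod_congr rfl fun w _ => by rw [Finsupp.neg_apply, zpow_neg]


noncomputable def XX (k : ℤ) : Laurent2 := T2 (k, 0)
noncomputable def YY (k : ℤ) : Laurent2 := T2 (0, k)
noncomputable def gb (m : ℕ) : Laurent2 := ∑ j ∈ range m, YY j
noncomputable def ga (m : ℕ) : Laurent2 := ∑ j ∈ range m, YY (-(j : ℤ))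

lemma XX_mul' {a b c : ℤ} (h : a + b = c) : XX a * XX b = XX c := by
  rw [XX, XX, XX, T2_mul]; rw [Prod.mk_add_mk, add_zero, h]

lemma YY_mul' {a b c : ℤ} (h : a + b = c) : YY a * YY b = YY c := by
  rw [YY, YY, YY, T2_mul]; rw [Prod.mk_add_mk, add_zero, h]

lemma XX_mul_YY (a b : ℤ) : XX a * YY b = T2 (a, b) := by
  rw [XX, YY, T2_mul, Prod.mk_add_mk, add_zero, zero_add]

lemma XX_zero : XX 0 = 1 := T2_zero
lemma YY_zero : YY 0 = 1 := T2_zero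

lemma e1 (m : ℕ) : (1 - YY 1) * gb m = 1 - YY m := by
  induction m with
  | zero => simp [gb, YY_zero]
  | succ m ih =>
    have hgb : gb (m + 1) = gb m + YY (m : ℤ) := Finset.sum_range_succ _ m
    have h1 : YY (m : ℤ) * YY 1 = YY ((m : ℤ) + 1) := YY_mul' rfl
    have hc : ((m + 1 : ℕ) : ℤ) = (m : ℤ) + 1 := by push_cast; ring
    rw [hgb, hc]
    linear_combination ih - h1

lemma e2 (m : ℕ) : ga m = YY (1 - (m : ℤ)) * gb m := by
  induction m with
  | zero => simp [ga, gb]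
  | succ m ih =>
    have hga : ga (m + 1) = ga m + YY (-(m : ℤ)) := Finset.sum_range_succ _ m
    have hgb : gb (m + 1) = gb m + YY (m : ℤ) := Finset.sum_range_succ _ m
    have hc : ((m + 1 : ℕ) : ℤ) = (m : ℤ) + 1 := by push_cast; ring
    have hA : YY (1 - (m : ℤ)) = YY (-(m : ℤ)) * YY 1 := (YY_mul' (by ring)).symm
    have hB : YY (-(m : ℤ)) * YY (m : ℤ) = 1 := (YY_mul' (show -(m:ℤ) + m = 0 by ring)).trans YY_zero
    have hd : (1 : ℤ) - ((m : ℤ) + 1) = -(m : ℤ) := by ring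
    rw [hga, hgb, hc, hd, ih]
    linear_combination gb m * hA - YY (-(m : ℤ)) * e1 m

lemma e2' (m : ℕ) : (1 - YY 1) * ga m = YY (1 - (m : ℤ)) - YY 1 := by
  have h1 : YY (1 - (m : ℤ)) * YY (m : ℤ) = YY 1 := YY_mul' (by ring)
  rw [e2]
  linear_combination YY (1 - (m : ℤ)) * e1 m - h1

lemma perI {R : Type*} [CommRing R] (p q u y1 yA y1A y1M gbm gbA gam gaA : R)
    (h2 : (1 - y1) * gbA = 1 - yA) (h3 : gam = y1M * gbm) (h4 : gaA = y1A * gbA)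
    (r2 : y1A * yA = y1) :
    (p - p * u) * yA * gam + (q * u - q) * y1A * gbm
      + (1 - u) * (1 - y1) * (q * gaA * gbm + p * gam * gbA)
    = (q * u - q) * y1 * gbm + (p - p * u) * y1M * gbm := by
  rw [h3, h4]
  linear_combination ((1 - u) * (q * y1A + p * y1M) * gbm) * h2 - ((1 - u) * q * gbm) * r2

lemma tel1 (n : ℕ) :
    ∑ i ∈ range n, (XX ((n : ℤ) - i + 1) - XX ((n : ℤ) - i)) = XX ((n : ℤ) + 1) - XX 1 := by
  have h := Finset.sum_range_sub' (fun i => XX ((n : ℤ) + 1 - i)) n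
  calc ∑ i ∈ range n, (XX ((n : ℤ) - i + 1) - XX ((n : ℤ) - i))
      = ∑ i ∈ range n, (XX ((n : ℤ) + 1 - (i : ℤ)) - XX ((n : ℤ) + 1 - ((i + 1 : ℕ) : ℤ))) := by
        refine Finset.sum_congr rfl fun i _ => ?_
        rw [congrArg XX (show (n : ℤ) - i + 1 = (n : ℤ) + 1 - i by ring),
          congrArg XX (show (n : ℤ) - i = (n : ℤ) + 1 - ((i + 1 : ℕ) : ℤ) by push_cast; ring)]
    _ = XX ((n : ℤ) + 1 - (0 : ℕ)) - XX ((n : ℤ) + 1 - (n : ℤ)) := h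
    _ = XX ((n : ℤ) + 1) - XX 1 := by
        rw [congrArg XX (show (n : ℤ) + 1 - ((0 : ℕ) : ℤ) = (n : ℤ) + 1 by push_cast; ring),
          congrArg XX (show (n : ℤ) + 1 - (n : ℤ) = 1 by ring)]

lemma tel2 (n : ℕ) :
    ∑ i ∈ range n, (XX ((i : ℤ) - n) - XX ((i : ℤ) - n + 1)) = XX (-(n : ℤ)) - 1 := by
  have h := Finset.sum_range_sub' (fun i => XX ((i : ℤ) - n)) n
  calc ∑ i ∈ range n, (XX ((i : ℤ) - n) - XX ((i : ℤ) - n + 1))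
      = ∑ i ∈ range n, (XX ((i : ℤ) - n) - XX (((i + 1 : ℕ) : ℤ) - n)) := by
        refine Finset.sum_congr rfl fun i _ => ?_
        rw [congrArg XX (show (i : ℤ) - n + 1 = ((i + 1 : ℕ) : ℤ) - n by push_cast; ring)]
    _ = XX (((0 : ℕ) : ℤ) - n) - XX ((n : ℤ) - n) := h
    _ = XX (-(n : ℤ)) - 1 := by
        rw [congrArg XX (show ((0 : ℕ) : ℤ) - n = -(n : ℤ) by push_cast; ring),
          congrArg XX (show (n : ℤ) - (n : ℤ) = 0 by ring), XX_zero]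

def lg (ρ : ℕ → ℕ) (n i j : ℕ) : ℕ := ((Finset.Ico (i + 1) n).filter fun k => j < ρ k).card

lemma lg_last (ρ : ℕ → ℕ) (n j : ℕ) : lg ρ (n + 1) n j = 0 := by
  simp [lg]

lemma lg_full (ρ : ℕ → ℕ) (hρ : Antitone ρ) {N i j : ℕ} (hi : i < N) (hj : j < ρ (N - 1)) :
    lg ρ N i j = N - 1 - i := by
  rw [lg, Finset.filter_true_of_mem, Nat.card_Ico]
  · omega
  · intro k hk
    rw [Finset.mem_Ico] at hk
    exact lt_of_lt_of_le hj (hρ (by omega))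

lemma lg_ge (ρ : ℕ → ℕ) (n i j : ℕ) (hj : ¬ j < ρ n) : lg ρ (n + 1) i j = lg ρ n i j := by
  rw [lg, lg]
  congr 1
  ext k
  simp only [Finset.mem_filter, Finset.mem_Ico]
  constructor
  · rintro ⟨⟨h1, h2⟩, h3⟩
    refine ⟨⟨h1, ?_⟩, h3⟩
    rcases Nat.lt_succ_iff_lt_or_eq.mp h2 with h | rfl
    · exact h
    · exact absurd h3 hj
  · rintro ⟨⟨h1, h2⟩, h3⟩
    exact ⟨⟨h1, h2.trans (Nat.lt_succ_self n)⟩, h3⟩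

noncomputable def Fterm (ρ : ℕ → ℕ) (n i j : ℕ) : Laurent2 :=
  T2 (-(lg ρ n i j : ℤ), (ρ i : ℤ) - j) + T2 ((lg ρ n i j : ℤ) + 1, (j : ℤ) + 1 - ρ i)

lemma sumA (c d : ℤ) (m : ℕ) :
    ∑ j ∈ range m, T2 (c, d - (j : ℤ)) = XX c * YY d * ga m := by
  rw [ga, Finset.mul_sum]
  refine Finset.sum_congr rfl fun j _ => ?_
  rw [mul_assoc, YY_mul' (show d + -(j : ℤ) = d - j by ring), XX_mul_YY]

lemma sumB (c d : ℤ) (m : ℕ) :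
    ∑ j ∈ range m, T2 (c, (j : ℤ) + d) = XX c * YY d * gb m := by
  rw [gb, Finset.mul_sum]
  refine Finset.sum_congr rfl fun j _ => ?_
  rw [mul_assoc, YY_mul' (show d + (j : ℤ) = (j : ℤ) + d by ring), XX_mul_YY]

lemma sum_Fterm_row (ρ : ℕ → ℕ) (N i m : ℕ) (L : ℤ)
    (hlg : ∀ j, j < m → (lg ρ N i j : ℤ) = L) :
    ∑ j ∈ range m, Fterm ρ N i j
      = XX (-L) * YY (ρ i) * ga m + XX (L + 1) * YY (1 - (ρ i : ℤ)) * gb m := by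
  have hsum : ∀ j ∈ range m, Fterm ρ N i j
      = T2 (-L, (ρ i : ℤ) - (j : ℤ)) + T2 (L + 1, (j : ℤ) + (1 - (ρ i : ℤ))) := by
    intro j hj
    rw [Finset.mem_range] at hj
    rw [Fterm, hlg j hj]
    rw [show (j : ℤ) + 1 - ρ i = (j : ℤ) + (1 - (ρ i : ℤ)) by ring]
  rw [Finset.sum_congr rfl hsum, Finset.sum_add_distrib, sumA, sumB]


lemma core (ρ : ℕ → ℕ) (hρ : Antitone ρ) (n : ℕ) :
    (∑ i ∈ range n, XX (-(i : ℤ)) * ga (ρ i)) + XX 1 * YY 1 * (∑ i ∈ range n, XX (i : ℤ) * gb (ρ i))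
      - (1 - XX 1) * (1 - YY 1) *
        ((∑ i ∈ range n, XX (-(i : ℤ)) * ga (ρ i)) * (∑ i ∈ range n, XX (i : ℤ) * gb (ρ i)))
    = ∑ i ∈ range n, ∑ j ∈ range (ρ i), Fterm ρ n i j := by
  induction n with
  | zero => simp
  | succ n ih =>
    set m := ρ n with hm
    set Z := ∑ i ∈ range n, XX (-(i : ℤ)) * ga (ρ i) with hZdef
    set ZB := ∑ i ∈ range n, XX (i : ℤ) * gb (ρ i) with hZBdef
    have hZ : ∑ i ∈ range (n + 1), XX (-(i : ℤ)) * ga (ρ i) = Z + XX (-(n : ℤ)) * ga m :=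
      Finset.sum_range_succ _ n
    have hZB : ∑ i ∈ range (n + 1), XX (i : ℤ) * gb (ρ i) = ZB + XX (n : ℤ) * gb m :=
      Finset.sum_range_succ _ n
    -- row n of the RHS
    have hrow : ∑ j ∈ range m, Fterm ρ (n + 1) n j
        = YY (m : ℤ) * ga m + XX 1 * YY (1 - (m : ℤ)) * gb m := by
      have h := sum_Fterm_row ρ (n + 1) n m 0 (fun j hj => by rw [lg_last]; simp)
      rw [h, congrArg XX (show (-0 : ℤ) = 0 from neg_zero), XX_zero, one_mul,
        congrArg XX (show (0 : ℤ) + 1 = 1 by ring)]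
    -- per-row difference of the RHS, for i < n
    have hper : ∀ i ∈ range n, ∑ j ∈ range (ρ i), Fterm ρ (n + 1) i j
        = ∑ j ∈ range (ρ i), Fterm ρ n i j
          + ((XX ((i : ℤ) - n) - XX ((i : ℤ) - n + 1)) * YY (ρ i) * ga m
            + (XX ((n : ℤ) - i + 1) - XX ((n : ℤ) - i)) * YY (1 - (ρ i : ℤ)) * gb m) := by
      intro i hi
      rw [Finset.mem_range] at hi
      have hmle : m ≤ ρ i := hρ hi.le
      have hs1 := sum_Fterm_row ρ (n + 1) i m ((n : ℤ) - i)
        (fun j hj => by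
          have h := lg_full ρ hρ (show i < n + 1 by omega)
            (show j < ρ (n + 1 - 1) by simpa using hj)
          omega)
      have hs2 := sum_Fterm_row ρ n i m ((n : ℤ) - i - 1)
        (fun j hj => by
          have hj' : j < ρ (n - 1) := lt_of_lt_of_le hj (hρ (by omega))
          have h := lg_full ρ hρ (show i < n by omega) hj'
          omega)
      rw [congrArg XX (show -((n : ℤ) - i) = (i : ℤ) - n by ring)] at hs1
      rw [congrArg XX (show -((n : ℤ) - i - 1) = (i : ℤ) - n + 1 by ring),
        congrArg XX (show (n : ℤ) - i - 1 + 1 = (n : ℤ) - i by ring)] at hs2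
      -- split ranges
      have hsplit : ∀ N', (∀ j, m ≤ j → lg ρ N' i j = lg ρ n i j) →
          ∑ j ∈ range (ρ i), Fterm ρ N' i j
            = ∑ j ∈ range m, Fterm ρ N' i j + ∑ j ∈ Finset.Ico m (ρ i), Fterm ρ n i j := by
        intro N' hN'
        rw [Finset.range_eq_Ico, ← Finset.sum_Ico_consecutive _ (Nat.zero_le m) hmle,
          ← Finset.range_eq_Ico]
        congr 1
        refine Finset.sum_congr rfl fun j hj => ?_
        rw [Finset.mem_Ico] at hj
        rw [Fterm, Fterm, hN' j hj.1]
      have hl1 := hsplit (n + 1) (fun j hj => lg_ge ρ n i j (by omega))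
      have hl2 := hsplit n (fun j _ => rfl)
      rw [hl1, hl2, hs1, hs2]
      ring
    -- assemble the RHS
    have hRHS : ∑ i ∈ range (n + 1), ∑ j ∈ range (ρ i), Fterm ρ (n + 1) i j
        = (∑ i ∈ range n, ∑ j ∈ range (ρ i), Fterm ρ n i j)
          + ∑ i ∈ range n, ((XX ((i : ℤ) - n) - XX ((i : ℤ) - n + 1)) * YY (ρ i) * ga m
            + (XX ((n : ℤ) - i + 1) - XX ((n : ℤ) - i)) * YY (1 - (ρ i : ℤ)) * gb m)
          + (YY (m : ℤ) * ga m + XX 1 * YY (1 - (m : ℤ)) * gb m) := by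
      rw [Finset.sum_range_succ, Finset.sum_congr rfl hper, Finset.sum_add_distrib, hrow]
    -- expand the products with Z and ZB
    have hZX : Z * (XX (n : ℤ) * gb m) = ∑ i ∈ range n, XX ((n : ℤ) - i) * (ga (ρ i) * gb m) := by
      rw [hZdef, Finset.sum_mul]
      refine Finset.sum_congr rfl fun i _ => ?_
      calc XX (-(i : ℤ)) * ga (ρ i) * (XX (n : ℤ) * gb m)
          = XX (-(i : ℤ)) * XX (n : ℤ) * (ga (ρ i) * gb m) := by ring
        _ = XX ((n : ℤ) - i) * (ga (ρ i) * gb m) := by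
            rw [XX_mul' (show -(i : ℤ) + n = (n : ℤ) - i by ring)]
    have hZB2 : XX (-(n : ℤ)) * ga m * ZB = ∑ i ∈ range n, XX ((i : ℤ) - n) * (ga m * gb (ρ i)) := by
      rw [hZBdef, Finset.mul_sum]
      refine Finset.sum_congr rfl fun i _ => ?_
      calc XX (-(n : ℤ)) * ga m * (XX (i : ℤ) * gb (ρ i))
          = XX (-(n : ℤ)) * XX (i : ℤ) * (ga m * gb (ρ i)) := by ring
        _ = XX ((i : ℤ) - n) * (ga m * gb (ρ i)) := by
            rw [XX_mul' (show -(n : ℤ) + i = (i : ℤ) - n by ring)]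
    -- the per-i key identity and the telescoped sum
    have hkey : ∑ i ∈ range n,
        (((XX ((i : ℤ) - n) - XX ((i : ℤ) - n + 1)) * YY (ρ i) * ga m
            + (XX ((n : ℤ) - i + 1) - XX ((n : ℤ) - i)) * YY (1 - (ρ i : ℤ)) * gb m)
          + (1 - XX 1) * (1 - YY 1) *
            (XX ((n : ℤ) - i) * (ga (ρ i) * gb m) + XX ((i : ℤ) - n) * (ga m * gb (ρ i))))
        = (XX ((n : ℤ) + 1) - XX 1) * (YY 1 * gb m)
          + (XX (-(n : ℤ)) - 1) * (YY (1 - (m : ℤ)) * gb m) := by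
      have hper2 : ∀ i ∈ range n,
          (((XX ((i : ℤ) - n) - XX ((i : ℤ) - n + 1)) * YY (ρ i) * ga m
            + (XX ((n : ℤ) - i + 1) - XX ((n : ℤ) - i)) * YY (1 - (ρ i : ℤ)) * gb m)
          + (1 - XX 1) * (1 - YY 1) *
            (XX ((n : ℤ) - i) * (ga (ρ i) * gb m) + XX ((i : ℤ) - n) * (ga m * gb (ρ i))))
          = (XX ((n : ℤ) - i + 1) - XX ((n : ℤ) - i)) * (YY 1 * gb m)
            + (XX ((i : ℤ) - n) - XX ((i : ℤ) - n + 1)) * (YY (1 - (m : ℤ)) * gb m) := by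
        intro i _
        have h := perI (XX ((i : ℤ) - n)) (XX ((n : ℤ) - i)) (XX 1) (YY 1) (YY (ρ i : ℤ))
          (YY (1 - (ρ i : ℤ))) (YY (1 - (m : ℤ))) (gb m) (gb (ρ i)) (ga m) (ga (ρ i))
          (e1 (ρ i)) (e2 m) (e2 (ρ i)) (YY_mul' (by ring))
        rw [XX_mul' (show (i : ℤ) - n + 1 = (i : ℤ) - n + 1 by ring),
          XX_mul' (show (n : ℤ) - i + 1 = (n : ℤ) - i + 1 by ring)] at h
        linear_combination h
      rw [Finset.sum_congr rfl hper2, Finset.sum_add_distrib, ← Finset.sum_mul, ← Finset.sum_mul,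
        tel1, tel2]
    -- final assembly
    rw [hZ, hZB, hRHS, ← ih]
    have hx1 : XX (-(n : ℤ)) * XX (n : ℤ) = 1 := by
      rw [XX_mul' (show -(n : ℤ) + n = 0 by ring), XX_zero]
    have hx2 : XX 1 * XX (n : ℤ) = XX ((n : ℤ) + 1) := XX_mul' (by ring)
    have hy1 : YY (1 - (m : ℤ)) * YY (m : ℤ) = YY 1 := YY_mul' (by ring)
    have he2 := e2 m
    have he1 := e1 m
    have hexpand : ∑ i ∈ range n,
        (((XX ((i : ℤ) - n) - XX ((i : ℤ) - n + 1)) * YY (ρ i) * ga m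
            + (XX ((n : ℤ) - i + 1) - XX ((n : ℤ) - i)) * YY (1 - (ρ i : ℤ)) * gb m)
          + (1 - XX 1) * (1 - YY 1) *
            (XX ((n : ℤ) - i) * (ga (ρ i) * gb m) + XX ((i : ℤ) - n) * (ga m * gb (ρ i))))
        = (∑ i ∈ range n, ((XX ((i : ℤ) - n) - XX ((i : ℤ) - n + 1)) * YY (ρ i) * ga m
            + (XX ((n : ℤ) - i + 1) - XX ((n : ℤ) - i)) * YY (1 - (ρ i : ℤ)) * gb m))
          + (1 - XX 1) * (1 - YY 1) *
            ((∑ i ∈ range n, XX ((n : ℤ) - i) * (ga (ρ i) * gb m))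
              + (∑ i ∈ range n, XX ((i : ℤ) - n) * (ga m * gb (ρ i)))) := by
      rw [Finset.sum_add_distrib, ← Finset.mul_sum, Finset.sum_add_distrib]
      rw [Finset.sum_add_distrib]
    linear_combination hexpand - hkey - (1 - XX 1) * (1 - YY 1) * hZX
      - (1 - XX 1) * (1 - YY 1) * hZB2
      + (XX (-(n : ℤ)) - (1 - XX 1) * (1 - YY 1) * (XX (-(n : ℤ)) * XX (n : ℤ)) * gb m
          - YY (m : ℤ)) * he2
      + (-(1 - XX 1) * (1 - YY 1) * YY (1 - (m : ℤ)) * gb m * gb m) * hx1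
      + (-(1 - XX 1) * YY (1 - (m : ℤ)) * gb m) * he1
      + (-(XX 1) * gb m) * hy1
      + (YY 1 * gb m) * hx2

lemma cell_fst_lt (μ : YoungDiagram) {c : ℕ × ℕ} (hc : c ∈ μ.cells) : c.1 < μ.colLen 0 := by
  rw [← YoungDiagram.mem_iff_lt_colLen]
  have hc' : (c.1, c.2) ∈ μ := by rw [← YoungDiagram.mem_cells, Prod.mk.eta]; exact hc
  exact μ.up_left_mem le_rfl (Nat.zero_le _) hc' 

lemma cells_sum {M : Type*} [AddCommMonoid M] (μ : YoungDiagram) (f : ℕ × ℕ → M) :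
    ∑ c ∈ μ.cells, f c
      = ∑ i ∈ range (μ.colLen 0), ∑ j ∈ range (μ.rowLen i), f (i, j) := by
  rw [Finset.sum_sigma']
  refine (Finset.sum_bij
    (fun (x : Σ _ : ℕ, ℕ) (_ : x ∈ (range (μ.colLen 0)).sigma fun i => range (μ.rowLen i)) =>
      ((x.1, x.2) : ℕ × ℕ)) ?_ ?_ ?_ ?_).symm
  · intro x hx
    rw [Finset.mem_sigma, Finset.mem_range, Finset.mem_range] at hx
    rw [YoungDiagram.mem_cells, YoungDiagram.mem_iff_lt_rowLen]
    exact hx.2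
  · intro x hx y hy hxy
    rw [Prod.mk.injEq] at hxy
    exact Sigma.ext hxy.1 (heq_of_eq hxy.2)
  · intro c hc
    refine ⟨⟨c.1, c.2⟩, ?_, Prod.mk.eta⟩
    rw [Finset.mem_sigma, Finset.mem_range, Finset.mem_range]
    refine ⟨cell_fst_lt μ hc, ?_⟩
    rw [← YoungDiagram.mem_iff_lt_rowLen]
    rw [← YoungDiagram.mem_cells, Prod.mk.eta]
    exact hc
  · intro x hx
    rfl

lemma Zof_eq (μ : YoungDiagram) :
    Zof μ = ∑ i ∈ range (μ.colLen 0), XX (-(i : ℤ)) * ga (μ.rowLen i) := by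
  rw [Zof, cells_sum μ (fun c => T2 (-(c.1 : ℤ), -(c.2 : ℤ)))]
  refine Finset.sum_congr rfl fun i _ => ?_
  rw [ga, Finset.mul_sum]
  refine Finset.sum_congr rfl fun j _ => ?_
  rw [YY, XX, T2_mul, Prod.mk_add_mk, add_zero, zero_add]

lemma Zbarof_eq (μ : YoungDiagram) :
    Zbarof μ = ∑ i ∈ range (μ.colLen 0), XX (i : ℤ) * gb (μ.rowLen i) := by
  rw [Zbarof, cells_sum μ (fun c => T2 ((c.1 : ℤ), (c.2 : ℤ)))]
  refine Finset.sum_congr rfl fun i _ => ?_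
  rw [gb, Finset.mul_sum]
  refine Finset.sum_congr rfl fun j _ => ?_
  rw [YY, XX, T2_mul, Prod.mk_add_mk, add_zero, zero_add]

lemma leg_eq_lg (μ : YoungDiagram) {i j : ℕ} (h : (i, j) ∈ μ) :
    legLength μ (i, j) = lg μ.rowLen (μ.colLen 0) i j := by
  rw [legLength, lg]
  apply Finset.card_bij (fun d _ => d.1)
  · intro d hd
    rw [Finset.mem_filter] at hd
    obtain ⟨hd1, hd2, hd3⟩ := hd
    have hlt := cell_fst_lt μ hd1
    rw [YoungDiagram.mem_cells] at hd1
    have hd1' : (d.1, d.2) ∈ μ := by rwa [Prod.mk.eta]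
    rw [YoungDiagram.mem_iff_lt_rowLen] at hd1'
    rw [Finset.mem_filter, Finset.mem_Ico]
    have hd2' : d.2 = j := hd2
    have hd3' : i < d.1 := hd3
    exact ⟨⟨by omega, hlt⟩, by omega⟩
  · intro d1 hd1 d2 hd2 he
    rw [Finset.mem_filter] at hd1 hd2
    have h1 : d1.2 = j := hd1.2.1
    have h2 : d2.2 = j := hd2.2.1
    ext
    · exact he
    · rw [h1, h2]
  · intro k hk
    rw [Finset.mem_filter, Finset.mem_Ico] at hk
    refine ⟨(k, j), ?_, rfl⟩
    rw [Finset.mem_filter]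
    exact ⟨by rw [YoungDiagram.mem_cells, YoungDiagram.mem_iff_lt_rowLen]; exact hk.2,
      rfl, hk.1.1⟩

lemma arm_eq (μ : YoungDiagram) {i j : ℕ} (h : (i, j) ∈ μ) :
    armLength μ (i, j) = μ.rowLen i - j - 1 := by
  rw [armLength]
  have heq : (μ.cells.filter fun d => d.1 = i ∧ j < d.2)
      = (Finset.Ico (j + 1) (μ.rowLen i)).image (fun j' => (i, j')) := by
    ext d
    simp only [Finset.mem_filter, Finset.mem_image, Finset.mem_Ico, YoungDiagram.mem_cells]
    constructor
    · rintro ⟨hd1, hd2, hd3⟩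
      have hd1' : (d.1, d.2) ∈ μ := by rwa [Prod.mk.eta]
      rw [YoungDiagram.mem_iff_lt_rowLen] at hd1'
      have hd2' : d.1 = i := hd2
      rw [hd2'] at hd1'
      refine ⟨d.2, ⟨by omega, by omega⟩, by rw [← hd2']⟩
    · rintro ⟨j', ⟨h1, h2⟩, rfl⟩
      refine ⟨YoungDiagram.mem_iff_lt_rowLen.mpr h2, rfl, ?_⟩
      omega
  rw [heq, Finset.card_image_of_injective _ (fun a b hab => by simpa using hab), Nat.card_Ico]
  omega


lemma key (μ : YoungDiagram) :
    Tlam μ = ∑ c ∈ μ.cells,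
      (T2 (-(legLength μ c : ℤ), (armLength μ c : ℤ) + 1)
        + T2 ((legLength μ c : ℤ) + 1, -(armLength μ c : ℤ))) := by
  have hρ : Antitone μ.rowLen := fun a b hab => μ.rowLen_anti a b hab
  have hc := core μ.rowLen hρ (μ.colLen 0)
  rw [Tlam, Zof_eq, Zbarof_eq, ← XX_mul_YY 1 1,
    show T2 ((1 : ℤ), (0 : ℤ)) = XX 1 from rfl,
    show T2 ((0 : ℤ), (1 : ℤ)) = YY 1 from rfl, hc,
    cells_sum μ (fun c => T2 (-(legLength μ c : ℤ), (armLength μ c : ℤ) + 1)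
        + T2 ((legLength μ c : ℤ) + 1, -(armLength μ c : ℤ)))]
  refine Finset.sum_congr rfl fun i _ => Finset.sum_congr rfl fun j hj => ?_
  have hj' : j < μ.rowLen i := Finset.mem_range.mp hj
  have hmem : (i, j) ∈ μ := YoungDiagram.mem_iff_lt_rowLen.mpr hj'
  have hleg := leg_eq_lg μ hmem
  have harm := arm_eq μ hmem
  have e1 : -(lg μ.rowLen (μ.colLen 0) i j : ℤ) = -(legLength μ (i, j) : ℤ) := by rw [hleg]
  have e2 : (μ.rowLen i : ℤ) - (j : ℤ) = (armLength μ (i, j) : ℤ) + 1 := by omega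
  have e3 : (lg μ.rowLen (μ.colLen 0) i j : ℤ) + 1 = (legLength μ (i, j) : ℤ) + 1 := by rw [hleg]
  have e4 : (j : ℤ) + 1 - (μ.rowLen i : ℤ) = -(armLength μ (i, j) : ℤ) := by omega
  simp only [Fterm]
  rw [e1, e2, e3, e4]

-- evaluation lemmas
lemma sum_pair_apply {ι : Type*} (s : Finset ι) (g1 g2 : ι → ℤ × ℤ) (f1 f2 : ι → ℤ) (u : ℤ × ℤ) :
    (∑ c ∈ s, (AddMonoidAlgebra.single (g1 c) (f1 c)
        + AddMonoidAlgebra.single (g2 c) (f2 c)) : Laurent2).coeff u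
      = ∑ c ∈ s, ((if g1 c = u then f1 c else 0) + (if g2 c = u then f2 c else 0)) := by
  rw [AddMonoidAlgebra.coeff_sum, Finset.sum_apply']
  refine Finset.sum_congr rfl fun c _ => ?_
  rw [AddMonoidAlgebra.coeff_add, Finsupp.add_apply, AddMonoidAlgebra.coeff_single_apply,
    AddMonoidAlgebra.coeff_single_apply]

lemma T2_pair : ∀ (a b : ℤ × ℤ), T2 a + T2 b
    = AddMonoidAlgebra.single a (1 : ℤ) + AddMonoidAlgebra.single b (1 : ℤ) := fun _ _ => rfl

lemma key' (μ : YoungDiagram) :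
    Tlam μ = ∑ c ∈ μ.cells,
      (AddMonoidAlgebra.single ((-(legLength μ c : ℤ), (armLength μ c : ℤ) + 1) : ℤ × ℤ) (1 : ℤ)
        + AddMonoidAlgebra.single (((legLength μ c : ℤ) + 1, -(armLength μ c : ℤ)) : ℤ × ℤ) (1 : ℤ)) :=
  key μ


lemma dt1_apply (V : Laurent2) (u : ℤ × ℤ) : (dt1 V).coeff u = u.1 * V.coeff u := by
  rw [dt1, AddMonoidAlgebra.coeff_sum, Finset.sum_apply']
  rw [Finset.sum_congr rfl (fun w _ => AddMonoidAlgebra.coeff_single_apply (a := w) (b := w.1 * V.coeff w) (a' := u))]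
  by_cases hu : u ∈ V.coeff.support
  · rw [Finset.sum_ite_eq' V.coeff.support u (fun w => w.1 * V.coeff w), if_pos hu]
  · rw [Finset.sum_ite_eq' V.coeff.support u (fun w => w.1 * V.coeff w), if_neg hu]
    rw [Finsupp.notMem_support_iff.mp hu, mul_zero]

lemma dt2_apply (V : Laurent2) (u : ℤ × ℤ) : (dt2 V).coeff u = u.2 * V.coeff u := by
  rw [dt2, AddMonoidAlgebra.coeff_sum, Finset.sum_apply']
  rw [Finset.sum_congr rfl (fun w _ => AddMonoidAlgebra.coeff_single_apply (a := w) (b := w.2 * V.coeff w) (a' := u))]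
  by_cases hu : u ∈ V.coeff.support
  · rw [Finset.sum_ite_eq' V.coeff.support u (fun w => w.2 * V.coeff w), if_pos hu]
  · rw [Finset.sum_ite_eq' V.coeff.support u (fun w => w.2 * V.coeff w), if_neg hu]
    rw [Finsupp.notMem_support_iff.mp hu, mul_zero]

lemma dt1_Tlam (μ : YoungDiagram) :
    dt1 (Tlam μ) = ∑ c ∈ μ.cells,
      (AddMonoidAlgebra.single ((-(legLength μ c : ℤ), (armLength μ c : ℤ) + 1) : ℤ × ℤ)
          (-(legLength μ c : ℤ))
        + AddMonoidAlgebra.single (((legLength μ c : ℤ) + 1, -(armLength μ c : ℤ)) : ℤ × ℤ)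
          ((legLength μ c : ℤ) + 1)) := by
  ext u
  rw [dt1_apply, key', sum_pair_apply, sum_pair_apply, Finset.mul_sum]
  refine Finset.sum_congr rfl fun c _ => ?_
  by_cases h1 : ((-(legLength μ c : ℤ), (armLength μ c : ℤ) + 1) : ℤ × ℤ) = u
  · have h2 : ¬ (((legLength μ c : ℤ) + 1, -(armLength μ c : ℤ)) : ℤ × ℤ) = u := by
      intro h2
      rw [← h2, Prod.mk.injEq] at h1
      omega
    rw [if_pos h1, if_pos h1, if_neg h2, if_neg h2, ← h1]
    simp
  · rw [if_neg h1, if_neg h1]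
    by_cases h2 : (((legLength μ c : ℤ) + 1, -(armLength μ c : ℤ)) : ℤ × ℤ) = u
    · rw [if_pos h2, if_pos h2, ← h2]
      simp
    · rw [if_neg h2, if_neg h2]
      simp

lemma dt2_Tlam (μ : YoungDiagram) :
    dt2 (Tlam μ) = ∑ c ∈ μ.cells,
      (AddMonoidAlgebra.single ((-(legLength μ c : ℤ), (armLength μ c : ℤ) + 1) : ℤ × ℤ)
          ((armLength μ c : ℤ) + 1)
        + AddMonoidAlgebra.single (((legLength μ c : ℤ) + 1, -(armLength μ c : ℤ)) : ℤ × ℤ)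
          (-(armLength μ c : ℤ))) := by
  ext u
  rw [dt2_apply, key', sum_pair_apply, sum_pair_apply, Finset.mul_sum]
  refine Finset.sum_congr rfl fun c _ => ?_
  by_cases h1 : ((-(legLength μ c : ℤ), (armLength μ c : ℤ) + 1) : ℤ × ℤ) = u
  · have h2 : ¬ (((legLength μ c : ℤ) + 1, -(armLength μ c : ℤ)) : ℤ × ℤ) = u := by
      intro h2
      rw [← h2, Prod.mk.injEq] at h1
      omega
    rw [if_pos h1, if_pos h1, if_neg h2, if_neg h2, ← h1]
    simp
  · rw [if_neg h1, if_neg h1]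
    by_cases h2 : (((legLength μ c : ℤ) + 1, -(armLength μ c : ℤ)) : ℤ × ℤ) = u
    · rw [if_pos h2, if_pos h2, ← h2]
      simp
    · rw [if_neg h2, if_neg h2]
      simp

theorem stmt1 (μ : YoungDiagram) :
    (Tlam μ).coeff (0, 0) = 0 ∧ (dt1 (Tlam μ)).coeff (0, 0) = 0 ∧ (dt2 (Tlam μ)).coeff (0, 0) = 0 ∧
    ehat (-(Tlam μ)) =
      ∏ c ∈ μ.cells,
        (br (-(legLength μ c : ℤ), (armLength μ c : ℤ) + 1) *
          br ((legLength μ c : ℤ) + 1, -(armLength μ c : ℤ)))⁻¹ ∧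
    ehat (-(dt1 (Tlam μ))) =
      ∏ c ∈ μ.cells,
        br (-(legLength μ c : ℤ), (armLength μ c : ℤ) + 1) ^ (legLength μ c : ℤ) *
          br ((legLength μ c : ℤ) + 1, -(armLength μ c : ℤ)) ^ (-(legLength μ c : ℤ) - 1) ∧
    ehat (-(dt2 (Tlam μ))) =
      ∏ c ∈ μ.cells,
        br ((legLength μ c : ℤ) + 1, -(armLength μ c : ℤ)) ^ (armLength μ c : ℤ) *
          br (-(legLength μ c : ℤ), (armLength μ c : ℤ) + 1) ^ (-(armLength μ c : ℤ) - 1) := by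
  classical
  set gA : ℕ × ℕ → ℤ × ℤ := fun c => (-(legLength μ c : ℤ), (armLength μ c : ℤ) + 1) with hgA
  set gB : ℕ × ℕ → ℤ × ℤ := fun c => ((legLength μ c : ℤ) + 1, -(armLength μ c : ℤ)) with hgB
  have hg : ∀ x ∈ μ.cells.disjSum μ.cells, Sum.elim gA gB x ≠ 0 := by
    rintro (c | c) _ hx
    · rw [Sum.elim_inl, hgA, Prod.ext_iff] at hx
      simp only [Prod.fst_zero, Prod.snd_zero] at hx
      omega
    · rw [Sum.elim_inr, hgB, Prod.ext_iff] at hx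
      simp only [Prod.fst_zero, Prod.snd_zero] at hx
      omega
  refine ⟨?_, ?_, ?_, ?_, ?_, ?_⟩
  · rw [key', sum_pair_apply]
    apply Finset.sum_eq_zero
    intro c _
    rw [if_neg (by rw [Prod.ext_iff]; simp only; omega),
      if_neg (by rw [Prod.ext_iff]; simp only; omega), add_zero]
  · rw [dt1_apply, zero_mul]
  · rw [dt2_apply, zero_mul]
  · have hT : (∑ x ∈ μ.cells.disjSum μ.cells,
        AddMonoidAlgebra.single (Sum.elim gA gB x) ((1 : ℤ))) = Tlam μ := by
      rw [Finset.sum_disjSum]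
      simp only [Sum.elim_inl, Sum.elim_inr]
      rw [key', Finset.sum_add_distrib]
    rw [ehat_neg, ← hT, ehat_sum _ _ _ hg, Finset.prod_disjSum]
    simp only [Sum.elim_inl, Sum.elim_inr, zpow_one]
    rw [← Finset.prod_mul_distrib, ← Finset.prod_inv_distrib]
  · have hT : (∑ x ∈ μ.cells.disjSum μ.cells,
        AddMonoidAlgebra.single (Sum.elim gA gB x)
          (Sum.elim (fun c => -(legLength μ c : ℤ)) (fun c => (legLength μ c : ℤ) + 1) x))
        = dt1 (Tlam μ) := by
      rw [Finset.sum_disjSum]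
      simp only [Sum.elim_inl, Sum.elim_inr]
      rw [dt1_Tlam, Finset.sum_add_distrib]
    rw [ehat_neg, ← hT, ehat_sum _ _ _ hg, Finset.prod_disjSum]
    simp only [Sum.elim_inl, Sum.elim_inr]
    rw [mul_inv, ← Finset.prod_inv_distrib, ← Finset.prod_inv_distrib, ← Finset.prod_mul_distrib]
    refine Finset.prod_congr rfl fun c _ => ?_
    rw [← zpow_neg, neg_neg, ← zpow_neg,
      show -((legLength μ c : ℤ) + 1) = -(legLength μ c : ℤ) - 1 by ring]
  · have hT : (∑ x ∈ μ.cells.disjSum μ.cells,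
        AddMonoidAlgebra.single (Sum.elim gA gB x)
          (Sum.elim (fun c => (armLength μ c : ℤ) + 1) (fun c => -(armLength μ c : ℤ)) x))
        = dt2 (Tlam μ) := by
      rw [Finset.sum_disjSum]
      simp only [Sum.elim_inl, Sum.elim_inr]
      rw [dt2_Tlam, Finset.sum_add_distrib]
    rw [ehat_neg, ← hT, ehat_sum _ _ _ hg, Finset.prod_disjSum]
    simp only [Sum.elim_inl, Sum.elim_inr]
    rw [mul_inv, ← Finset.prod_inv_distrib, ← Finset.prod_inv_distrib, ← Finset.prod_mul_distrib]
    refine Finset.prod_congr rfl fun c _ => ?_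
    rw [← zpow_neg, ← zpow_neg, neg_neg,
      show -((armLength μ c : ℤ) + 1) = -(armLength μ c : ℤ) - 1 by ring, mul_comm]
end

section
/- For every Young diagram λ, every skew plane partition n of shape ℤ²_{≥0}∖λ, and every integer a, the coefficient of the monomial t1^a·t2^a·t3^a in the Laurent polynomial v_n ∈ ℤ[t1^{±1},t2^{±1},t3^{±1}] is zero. In particular v_n has zero constant term. -/
/-!
STATEMENT 12: For every Young diagram λ, every skew plane partition n of shape
ℤ²_{≥0}∖λ, and every a ∈ ℤ, the coefficient of t1^a·t2^a·t3^a in v_n is zero;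
in particular v_n has zero constant term.
-/

open Finset

/-- A skew plane partition of shape ℤ²_{≥0} ∖ λ. -/
structure SkewPP (μ : YoungDiagram) where
  toFun : ℕ × ℕ → ℕ
  eq_zero_of_mem : ∀ c ∈ μ, toFun c = 0
  finite_support : (Function.support toFun).Finite
  antitone : ∀ c c' : ℕ × ℕ, c ∉ μ → c' ∉ μ → c.1 ≤ c'.1 → c.2 ≤ c'.2 →
    toFun c' ≤ toFun c

/-- The Laurent polynomial ring ℤ[t1^{±1}, t2^{±1}, t3^{±1}]. -/
abbrev Laurent3 : Type := AddMonoidAlgebra ℤ (ℤ × ℤ × ℤ)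

/-- The monomial t1^{w1}·t2^{w2}·t3^{w3}. -/
noncomputable def T3 (w : ℤ × ℤ × ℤ) : Laurent3 := AddMonoidAlgebra.single w 1

/-- The ring involution t_i ↦ t_i^{−1}: it negates all exponents. -/
noncomputable def bar3 (V : Laurent3) : Laurent3 :=
  AddMonoidAlgebra.ofCoeff (Finsupp.mapDomain (fun w : ℤ × ℤ × ℤ => -w) V.coeff)

/-- Z_λ = Σ_{(i,j)∈λ} t1^{−i}t2^{−j}. -/
noncomputable def Zlam3 (μ : YoungDiagram) : Laurent3 :=
  ∑ c ∈ μ.cells, T3 (-(c.1 : ℤ), -(c.2 : ℤ), 0)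

/-- Z_n = Σ_{(i,j)∈(ℕ×ℕ)∖λ} Σ_{α=0}^{n_{(i,j)}−1} t1^{−i}t2^{−j}t3^{−α}. -/
noncomputable def Zskew {μ : YoungDiagram} (n : SkewPP μ) : Laurent3 :=
  ∑ c ∈ n.finite_support.toFinset,
    ∑ α ∈ Finset.range (n.toFun c), T3 (-(c.1 : ℤ), -(c.2 : ℤ), -(α : ℤ))

/-- The vertex term
v_n = Z_n − Z̄_n·t1t2t3 − (1−t1)(1−t2)(−t3·Z_λ·Z̄_n + Z̄_λ·Z_n + (1−t3)·Z_n·Z̄_n). -/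
noncomputable def vDT {μ : YoungDiagram} (n : SkewPP μ) : Laurent3 :=
  Zskew n - bar3 (Zskew n) * T3 (1, 1, 1)
    - (1 - T3 (1, 0, 0)) * (1 - T3 (0, 1, 0)) *
        (-(T3 (0, 0, 1)) * (Zlam3 μ * bar3 (Zskew n))
          + bar3 (Zlam3 μ) * Zskew n
          + (1 - T3 (0, 0, 1)) * (Zskew n * bar3 (Zskew n)))

section Aux
variable {μ : YoungDiagram} (n : SkewPP μ)

/-- indicator of the box (x,y,z) being a cell of the solid partition -/
def Hn (x y z : ℤ) : ℤ :=
  if 0 ≤ x ∧ 0 ≤ y ∧ 0 ≤ z ∧ z < (n.toFun (x.toNat, y.toNat) : ℤ) then 1 else 0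

/-- indicator of (x,y) ∈ μ -/
def Mc (μ : YoungDiagram) (x y : ℤ) : ℤ :=
  if 0 ≤ x ∧ 0 ≤ y ∧ (x.toNat, y.toNat) ∈ μ then 1 else 0

/-- indicator of (x,y) ∈ μ(z) = μ ∪ {n > z} -/
def chi (z x y : ℤ) : ℤ :=
  if 0 ≤ x ∧ 0 ≤ y ∧ ((x.toNat, y.toNat) ∈ μ ∨ z < (n.toFun (x.toNat, y.toNat) : ℤ))
  then 1 else 0

lemma Hn_zneg {x y z : ℤ} (h : z < 0) : Hn n x y z = 0 := by
  unfold Hn; rw [if_neg]; rintro ⟨_, _, h1, _⟩; omega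

lemma Hn_xneg {x y z : ℤ} (h : x < 0) : Hn n x y z = 0 := by
  unfold Hn; rw [if_neg]; rintro ⟨h1, _, _, _⟩; omega

/-- downward closedness of μ(z) -/
lemma mem_dc (z : ℤ) (i j x y : ℕ) (hx : x ≤ i) (hy : y ≤ j)
    (h : (i, j) ∈ μ ∨ z < (n.toFun (i, j) : ℤ)) :
    (x, y) ∈ μ ∨ z < (n.toFun (x, y) : ℤ) := by
  rcases h with h | h
  · exact Or.inl (μ.up_left_mem hx hy h)
  · by_cases hz : 0 ≤ z
    · by_cases hm : (x, y) ∈ μ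
      · exact Or.inl hm
      · have hijm : (i, j) ∉ μ := by
          intro hij
          rw [n.eq_zero_of_mem _ hij] at h
          omega
        have := n.antitone (x, y) (i, j) hm hijm hx hy
        right; omega
    · right; omega

lemma chi_one {z p q : ℤ} {i j : ℕ} (hw : (i, j) ∈ μ ∨ z < (n.toFun (i, j) : ℤ))
    (hp : 0 ≤ p) (hq : 0 ≤ q) (hpi : p ≤ (i : ℤ)) (hqj : q ≤ (j : ℤ)) :
    chi n z p q = 1 := by
  unfold chi
  rw [if_pos]
  refine ⟨hp, hq, ?_⟩
  exact mem_dc n z i j p.toNat q.toNat (by omega) (by omega) hw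

lemma chi_zero {z p q : ℤ} (h : p < 0 ∨ q < 0) : chi n z p q = 0 := by
  unfold chi; rw [if_neg]; rintro ⟨h1, h2, _⟩; omega

/-- Key 2D lemma: mixed second difference of the indicator of μ(z) vanishes
strictly inside (shifted) and is the delta at the origin. -/
lemma DDchi (z p q : ℤ) (i j : ℕ) (hw : (i, j) ∈ μ ∨ z < (n.toFun (i, j) : ℤ))
    (hp : p ≤ (i : ℤ)) (hq : q ≤ (j : ℤ)) :
    chi n z p q - chi n z (p - 1) q - chi n z p (q - 1) + chi n z (p - 1) (q - 1)
      = if p = 0 ∧ q = 0 then 1 else 0 := by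
  rcases lt_trichotomy p 0 with hp0 | hp0 | hp0
  · rw [chi_zero n (Or.inl hp0), chi_zero n (Or.inl (by omega)),
      chi_zero n (Or.inl hp0), chi_zero n (Or.inl (by omega)), if_neg (by omega)]
    ring
  · subst hp0
    rcases lt_trichotomy q 0 with hq0 | hq0 | hq0
    · rw [chi_zero n (Or.inr hq0), chi_zero n (Or.inr hq0),
        chi_zero n (Or.inr (by omega)), chi_zero n (Or.inr (by omega)), if_neg (by omega)]
      ring
    · subst hq0
      rw [chi_one n hw le_rfl le_rfl (by omega) (by omega),
        chi_zero n (Or.inl (by omega)), chi_zero n (Or.inr (by omega)),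
        chi_zero n (Or.inl (by omega)), if_pos ⟨rfl, rfl⟩]
      ring
    · rw [chi_one n hw le_rfl (by omega) (by omega) hq,
        chi_zero n (Or.inl (by omega)), chi_one n hw le_rfl (by omega) (by omega) (by omega),
        chi_zero n (Or.inl (by omega)), if_neg (by omega)]
      ring
  · rcases lt_trichotomy q 0 with hq0 | hq0 | hq0
    · rw [chi_zero n (Or.inr hq0), chi_zero n (Or.inr hq0),
        chi_zero n (Or.inr (by omega)), chi_zero n (Or.inr (by omega)), if_neg (by omega)]
      ring
    · subst hq0
      rw [chi_one n hw (by omega) le_rfl hp (by omega),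
        chi_one n hw (by omega) le_rfl (by omega) (by omega),
        chi_zero n (Or.inr (by omega)), chi_zero n (Or.inr (by omega)), if_neg (by omega)]
      ring
    · rw [chi_one n hw (by omega) (by omega) hp hq,
        chi_one n hw (by omega) (by omega) (by omega) hq,
        chi_one n hw (by omega) (by omega) hp (by omega),
        chi_one n hw (by omega) (by omega) (by omega) (by omega), if_neg (by omega)]
      ring

/-- μ(z) decomposes as the disjoint union of μ and {n > z}, for z ≥ 0. -/
lemma M_add_H {z : ℤ} (hz : 0 ≤ z) (x y : ℤ) :
    Mc μ x y + Hn n x y z = chi n z x y := by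
  unfold Mc Hn chi
  by_cases hx : 0 ≤ x
  · by_cases hy : 0 ≤ y
    · by_cases hm : (x.toNat, y.toNat) ∈ μ
      · have hne : ¬(0 ≤ x ∧ 0 ≤ y ∧ 0 ≤ z ∧ z < (n.toFun (x.toNat, y.toNat) : ℤ)) := by
          rintro ⟨_, _, _, h4⟩
          rw [n.eq_zero_of_mem _ hm] at h4
          omega
        rw [if_pos ⟨hx, hy, hm⟩, if_neg hne, if_pos ⟨hx, hy, Or.inl hm⟩]
        ring
      · by_cases hh : z < (n.toFun (x.toNat, y.toNat) : ℤ)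
        · rw [if_neg (by tauto), if_pos ⟨hx, hy, hz, hh⟩, if_pos ⟨hx, hy, Or.inr hh⟩]; ring
        · rw [if_neg (by tauto), if_neg (by tauto), if_neg (by tauto)]; ring
    · rw [if_neg (by tauto), if_neg (by tauto), if_neg (by tauto)]; ring
  · rw [if_neg (by tauto), if_neg (by tauto), if_neg (by tauto)]; ring

/-- master indicator collapse -/
lemma sum_ind (x y z : ℤ) :
    ∑ c ∈ n.finite_support.toFinset, ∑ α ∈ Finset.range (n.toFun c),
      (if ((c.1 : ℤ), (c.2 : ℤ), (α : ℤ)) = (x, y, z) then (1 : ℤ) else 0)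
      = Hn n x y z := by
  by_cases h : 0 ≤ x ∧ 0 ≤ y ∧ 0 ≤ z
  · have step : ∀ c : ℕ × ℕ, ∀ α : ℕ,
        (if ((c.1 : ℤ), (c.2 : ℤ), (α : ℤ)) = (x, y, z) then (1 : ℤ) else 0)
          = if c = (x.toNat, y.toNat) then (if α = z.toNat then (1 : ℤ) else 0) else 0 := by
      intro c α
      have hiff : (((c.1 : ℤ), (c.2 : ℤ), (α : ℤ)) = (x, y, z)) ↔
          (c = (x.toNat, y.toNat) ∧ α = z.toNat) := by
        simp only [Prod.ext_iff]
        omega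
      rw [if_congr hiff rfl rfl, ite_and]
    calc ∑ c ∈ n.finite_support.toFinset, ∑ α ∈ Finset.range (n.toFun c),
          (if ((c.1 : ℤ), (c.2 : ℤ), (α : ℤ)) = (x, y, z) then (1 : ℤ) else 0)
        = ∑ c ∈ n.finite_support.toFinset,
            if c = (x.toNat, y.toNat) then (∑ α ∈ Finset.range (n.toFun c),
              if α = z.toNat then (1 : ℤ) else 0) else 0 := by
          refine Finset.sum_congr rfl fun c _ => ?_
          rw [Finset.sum_congr rfl fun α _ => step c α]
          split_ifs <;> simp
      _ = if (x.toNat, y.toNat) ∈ n.finite_support.toFinset then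
            (∑ α ∈ Finset.range (n.toFun (x.toNat, y.toNat)), if α = z.toNat then (1 : ℤ) else 0) else 0 :=
          Finset.sum_ite_eq' _ _ _
      _ = Hn n x y z := by
          rw [Finset.sum_ite_eq' (Finset.range (n.toFun (x.toNat, y.toNat))) z.toNat (fun _ => (1 : ℤ))]
          unfold Hn
          by_cases hlt : z.toNat < n.toFun (x.toNat, y.toNat)
          · have hmem : (x.toNat, y.toNat) ∈ n.finite_support.toFinset := by
              rw [Set.Finite.mem_toFinset, Function.mem_support]
              omega
            rw [if_pos hmem, if_pos (Finset.mem_range.2 hlt),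
              if_pos ⟨h.1, h.2.1, h.2.2, by omega⟩]
          · have h2 : ¬(0 ≤ x ∧ 0 ≤ y ∧ 0 ≤ z ∧ z < (n.toFun (x.toNat, y.toNat) : ℤ)) := by
              rintro ⟨_, _, _, h4⟩; omega
            have h3 : z.toNat ∉ Finset.range (n.toFun (x.toNat, y.toNat)) := by
              rw [Finset.mem_range]; omega
            rw [if_neg h2, if_neg h3]
            split_ifs <;> rfl
  · have hr : Hn n x y z = 0 := by
      unfold Hn
      rw [if_neg]
      rintro ⟨h1, h2, h3, _⟩
      exact h ⟨h1, h2, h3⟩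
    rw [hr]
    refine Finset.sum_eq_zero fun c _ => Finset.sum_eq_zero fun α _ => ?_
    rw [if_neg]
    simp only [Prod.ext_iff]
    omega

lemma T3_mul_apply (u : ℤ × ℤ × ℤ) (V : Laurent3) (w : ℤ × ℤ × ℤ) :
    (T3 u * V).coeff w = V.coeff (w - u) := by
  unfold T3
  rw [AddMonoidAlgebra.coeff_single_mul_apply, one_mul, neg_add_eq_sub]

lemma mul_T3_apply (V : Laurent3) (u w : ℤ × ℤ × ℤ) :
    (V * T3 u).coeff w = V.coeff (w - u) := by
  unfold T3
  rw [AddMonoidAlgebra.coeff_mul_single_apply, mul_one, sub_eq_add_neg]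

lemma bar3_apply (V : Laurent3) (w : ℤ × ℤ × ℤ) : (bar3 V).coeff w = V.coeff (-w) := by
  unfold bar3
  rw [AddMonoidAlgebra.coeff_ofCoeff]
  have h : Function.Injective (fun w : ℤ × ℤ × ℤ => -w) := fun a b hab => neg_injective hab
  have := Finsupp.mapDomain_apply h V.coeff (-w)
  simpa using this

lemma Zskew_apply (w : ℤ × ℤ × ℤ) : (Zskew n).coeff w = Hn n (-w.1) (-w.2.1) (-w.2.2) := by
  rw [← sum_ind n (-w.1) (-w.2.1) (-w.2.2)]
  unfold Zskew T3
  rw [AddMonoidAlgebra.coeff_sum, Finset.sum_apply']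
  refine Finset.sum_congr rfl fun c _ => ?_
  rw [AddMonoidAlgebra.coeff_sum, Finset.sum_apply']
  refine Finset.sum_congr rfl fun α _ => ?_
  rw [AddMonoidAlgebra.coeff_single_apply]
  refine if_congr ?_ rfl rfl
  simp only [Prod.ext_iff]
  omega

lemma bar3Zskew_apply (u : ℤ × ℤ × ℤ) : (bar3 (Zskew n)).coeff u = Hn n u.1 u.2.1 u.2.2 := by
  rw [bar3_apply, Zskew_apply]
  simp only [Prod.fst_neg, Prod.snd_neg, neg_neg]

lemma Zlam_apply (u : ℤ × ℤ × ℤ) :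
    (Zlam3 μ).coeff u = if u.2.2 = 0 then Mc μ (-u.1) (-u.2.1) else 0 := by
  unfold Zlam3 T3
  rw [AddMonoidAlgebra.coeff_sum, Finset.sum_apply']
  by_cases h : 0 ≤ -u.1 ∧ 0 ≤ -u.2.1 ∧ u.2.2 = 0
  · have step : ∀ b : ℕ × ℕ,
        (AddMonoidAlgebra.single ((-(b.1 : ℤ), -(b.2 : ℤ), 0) : ℤ × ℤ × ℤ) (1:ℤ)).coeff u
          = if b = ((-u.1).toNat, (-u.2.1).toNat) then (1 : ℤ) else 0 := by
      intro b
      rw [AddMonoidAlgebra.coeff_single_apply]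
      refine if_congr ?_ rfl rfl
      simp only [Prod.ext_iff]
      omega
    rw [Finset.sum_congr rfl fun b _ => step b, Finset.sum_ite_eq' _ _ _]
    rw [if_pos h.2.2]
    unfold Mc
    refine if_congr ?_ rfl rfl
    rw [YoungDiagram.mem_cells]
    exact ⟨fun hm => ⟨h.1, h.2.1, hm⟩, fun hm => hm.2.2⟩
  · have hr : (if u.2.2 = 0 then Mc μ (-u.1) (-u.2.1) else 0) = 0 := by
      unfold Mc
      split_ifs with h1 h2
      · exact absurd ⟨h2.1, h2.2.1, h1⟩ h
      · rfl
      · rfl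
    rw [hr]
    refine Finset.sum_eq_zero fun b _ => ?_
    rw [AddMonoidAlgebra.coeff_single_apply, if_neg]
    simp only [Prod.ext_iff]
    omega

lemma bar3Zlam_apply (u : ℤ × ℤ × ℤ) :
    (bar3 (Zlam3 μ)).coeff u = if u.2.2 = 0 then Mc μ u.1 u.2.1 else 0 := by
  rw [bar3_apply, Zlam_apply]
  simp only [Prod.fst_neg, Prod.snd_neg, neg_neg, neg_eq_zero]

lemma bar3_sum {σ : Type*} (S : Finset σ) (f : σ → Laurent3) :
    bar3 (∑ s ∈ S, f s) = ∑ s ∈ S, bar3 (f s) :=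
  by unfold bar3; rw [AddMonoidAlgebra.coeff_sum, Finsupp.mapDomain_finset_sum, AddMonoidAlgebra.ofCoeff_sum]

lemma bar3_T3 (w : ℤ × ℤ × ℤ) : bar3 (T3 w) = T3 (-w) := by
  unfold bar3 T3
  rw [AddMonoidAlgebra.coeff_single, Finsupp.mapDomain_single]; rfl

lemma bar3_Zskew : bar3 (Zskew n) = ∑ c ∈ n.finite_support.toFinset,
    ∑ α ∈ Finset.range (n.toFun c), T3 ((c.1 : ℤ), (c.2 : ℤ), (α : ℤ)) := by
  unfold Zskew
  rw [bar3_sum]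
  refine Finset.sum_congr rfl fun c _ => ?_
  rw [bar3_sum]
  refine Finset.sum_congr rfl fun α _ => ?_
  rw [bar3_T3]
  congr 1
  simp [Prod.ext_iff]

lemma Zskew_mul_apply (V : Laurent3) (w : ℤ × ℤ × ℤ) :
    (Zskew n * V).coeff w = ∑ c ∈ n.finite_support.toFinset,
      ∑ α ∈ Finset.range (n.toFun c), V.coeff (w + ((c.1 : ℤ), (c.2 : ℤ), (α : ℤ))) := by
  unfold Zskew
  rw [Finset.sum_mul, AddMonoidAlgebra.coeff_sum, Finset.sum_apply']
  refine Finset.sum_congr rfl fun c _ => ?_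
  rw [Finset.sum_mul, AddMonoidAlgebra.coeff_sum, Finset.sum_apply']
  refine Finset.sum_congr rfl fun α _ => ?_
  rw [T3_mul_apply]
  congr 1
  rw [show ((-(c.1 : ℤ), -(c.2 : ℤ), -(α : ℤ)) : ℤ × ℤ × ℤ)
      = -((c.1 : ℤ), (c.2 : ℤ), (α : ℤ)) from rfl, sub_neg_eq_add]

lemma barZskew_mul_apply (V : Laurent3) (w : ℤ × ℤ × ℤ) :
    (bar3 (Zskew n) * V).coeff w = ∑ c ∈ n.finite_support.toFinset,
      ∑ α ∈ Finset.range (n.toFun c), V.coeff (w - ((c.1 : ℤ), (c.2 : ℤ), (α : ℤ))) := by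
  rw [bar3_Zskew, Finset.sum_mul, AddMonoidAlgebra.coeff_sum, Finset.sum_apply']
  refine Finset.sum_congr rfl fun c _ => ?_
  rw [Finset.sum_mul, AddMonoidAlgebra.coeff_sum, Finset.sum_apply']
  refine Finset.sum_congr rfl fun α _ => ?_
  rw [T3_mul_apply]

noncomputable def p1 (w : ℤ × ℤ × ℤ) : ℤ := (Zskew n * bar3 (Zskew n)).coeff w
noncomputable def p2 (w : ℤ × ℤ × ℤ) : ℤ := (bar3 (Zlam3 μ) * Zskew n).coeff w
noncomputable def p3 (w : ℤ × ℤ × ℤ) : ℤ := (Zlam3 μ * bar3 (Zskew n)).coeff w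

lemma p1_eqA (w : ℤ × ℤ × ℤ) : p1 n w = ∑ c ∈ n.finite_support.toFinset,
    ∑ α ∈ Finset.range (n.toFun c),
      Hn n ((c.1 : ℤ) - w.1) ((c.2 : ℤ) - w.2.1) ((α : ℤ) - w.2.2) := by
  unfold p1
  rw [mul_comm, barZskew_mul_apply]
  refine Finset.sum_congr rfl fun c _ => Finset.sum_congr rfl fun α _ => ?_
  rw [Zskew_apply]
  simp only [Prod.fst_sub, Prod.snd_sub, neg_sub]

lemma p1_eqB (w : ℤ × ℤ × ℤ) : p1 n w = ∑ c ∈ n.finite_support.toFinset,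
    ∑ α ∈ Finset.range (n.toFun c),
      Hn n (w.1 + (c.1 : ℤ)) (w.2.1 + (c.2 : ℤ)) (w.2.2 + (α : ℤ)) := by
  unfold p1
  rw [Zskew_mul_apply]
  refine Finset.sum_congr rfl fun c _ => Finset.sum_congr rfl fun α _ => ?_
  rw [bar3Zskew_apply]
  simp only [Prod.fst_add, Prod.snd_add]

lemma p3_eqA (w : ℤ × ℤ × ℤ) : p3 n w = ∑ c ∈ n.finite_support.toFinset,
    ∑ α ∈ Finset.range (n.toFun c),
      (if w.2.2 - (α : ℤ) = 0 then Mc μ ((c.1 : ℤ) - w.1) ((c.2 : ℤ) - w.2.1) else 0) := by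
  unfold p3
  rw [mul_comm, barZskew_mul_apply]
  refine Finset.sum_congr rfl fun c _ => Finset.sum_congr rfl fun α _ => ?_
  rw [Zlam_apply]
  simp only [Prod.fst_sub, Prod.snd_sub, neg_sub]

lemma p2_eqB (w : ℤ × ℤ × ℤ) : p2 n w = ∑ c ∈ n.finite_support.toFinset,
    ∑ α ∈ Finset.range (n.toFun c),
      (if w.2.2 + (α : ℤ) = 0 then Mc μ (w.1 + (c.1 : ℤ)) (w.2.1 + (c.2 : ℤ)) else 0) := by
  unfold p2
  rw [mul_comm, Zskew_mul_apply]
  refine Finset.sum_congr rfl fun c _ => Finset.sum_congr rfl fun α _ => ?_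
  rw [bar3Zlam_apply]
  simp only [Prod.fst_add, Prod.snd_add]

lemma p2_pos_zero (w : ℤ × ℤ × ℤ) (h : 0 < w.2.2) : p2 n w = 0 := by
  rw [p2_eqB]
  refine Finset.sum_eq_zero fun c _ => Finset.sum_eq_zero fun α _ => ?_
  rw [if_neg (by omega)]

lemma p3_neg_zero (w : ℤ × ℤ × ℤ) (h : w.2.2 < 0) : p3 n w = 0 := by
  rw [p3_eqA]
  refine Finset.sum_eq_zero fun c _ => Finset.sum_eq_zero fun α _ => ?_
  rw [if_neg (by omega)]

lemma corner_mul_apply (X : Laurent3) (w : ℤ × ℤ × ℤ) :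
    ((1 - T3 (1, 0, 0)) * (1 - T3 (0, 1, 0)) * X).coeff w
      = X.coeff w - X.coeff (w - (1, 0, 0)) - X.coeff (w - (0, 1, 0)) + X.coeff (w - (1, 1, 0)) := by
  have h12 : T3 (1, 0, 0) * T3 (0, 1, 0) = T3 (1, 1, 0) := by
    unfold T3
    rw [AddMonoidAlgebra.single_mul_single]
    norm_num
  have expand : (1 - T3 (1, 0, 0)) * (1 - T3 (0, 1, 0)) * X
      = X - T3 (1, 0, 0) * X - T3 (0, 1, 0) * X + T3 (1, 1, 0) * X := by
    rw [← h12]; ring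
  rw [expand, AddMonoidAlgebra.coeff_add, AddMonoidAlgebra.coeff_sub, AddMonoidAlgebra.coeff_sub,
    Finsupp.add_apply, Finsupp.sub_apply, Finsupp.sub_apply,
    T3_mul_apply, T3_mul_apply, T3_mul_apply]

lemma BIG_apply (w : ℤ × ℤ × ℤ) :
    (-(T3 (0, 0, 1)) * (Zlam3 μ * bar3 (Zskew n))
      + bar3 (Zlam3 μ) * Zskew n
      + (1 - T3 (0, 0, 1)) * (Zskew n * bar3 (Zskew n))).coeff w
    = -(p3 n (w - (0, 0, 1))) + p2 n w + (p1 n w - p1 n (w - (0, 0, 1))) := by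
  have expand : (-(T3 (0, 0, 1)) * (Zlam3 μ * bar3 (Zskew n))
      + bar3 (Zlam3 μ) * Zskew n
      + (1 - T3 (0, 0, 1)) * (Zskew n * bar3 (Zskew n)))
      = bar3 (Zlam3 μ) * Zskew n + Zskew n * bar3 (Zskew n)
        - T3 (0, 0, 1) * (Zlam3 μ * bar3 (Zskew n))
        - T3 (0, 0, 1) * (Zskew n * bar3 (Zskew n)) := by ring
  rw [expand, AddMonoidAlgebra.coeff_sub, AddMonoidAlgebra.coeff_sub, AddMonoidAlgebra.coeff_add,
    Finsupp.sub_apply, Finsupp.sub_apply, Finsupp.add_apply,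
    T3_mul_apply, T3_mul_apply]
  unfold p1 p2 p3
  ring

lemma coeff_eq (a : ℤ) : (vDT n).coeff (a, a, a) =
    Hn n (-a) (-a) (-a) - Hn n (a-1) (a-1) (a-1)
    - ( (-(p3 n (a, a, a-1)) + p2 n (a, a, a) + (p1 n (a, a, a) - p1 n (a, a, a-1)))
      - (-(p3 n (a-1, a, a-1)) + p2 n (a-1, a, a) + (p1 n (a-1, a, a) - p1 n (a-1, a, a-1)))
      - (-(p3 n (a, a-1, a-1)) + p2 n (a, a-1, a) + (p1 n (a, a-1, a) - p1 n (a, a-1, a-1)))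
      + (-(p3 n (a-1, a-1, a-1)) + p2 n (a-1, a-1, a) + (p1 n (a-1, a-1, a) - p1 n (a-1, a-1, a-1))) ) := by
  unfold vDT
  rw [AddMonoidAlgebra.coeff_sub, AddMonoidAlgebra.coeff_sub, Finsupp.sub_apply, Finsupp.sub_apply, corner_mul_apply, mul_T3_apply,
    bar3Zskew_apply, Zskew_apply]
  simp only [Prod.mk_sub_mk, sub_zero]
  rw [BIG_apply, BIG_apply, BIG_apply, BIG_apply]
  simp only [Prod.mk_sub_mk, sub_zero]

lemma keyA (a : ℤ) (ha : 1 ≤ a) (i j α : ℕ) (hn : α < n.toFun (i, j)) :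
    (-(if (((i:ℤ), (j:ℤ), (α:ℤ)) : ℤ × ℤ × ℤ) = (a-1, a-1, a-1) then (1:ℤ) else 0))
    - (( -(if a - 1 - (α:ℤ) = 0 then Mc μ ((i:ℤ) - a) ((j:ℤ) - a) else 0)
          + (Hn n ((i:ℤ) - a) ((j:ℤ) - a) ((α:ℤ) - a)
              - Hn n ((i:ℤ) - a) ((j:ℤ) - a) ((α:ℤ) - (a-1))))
      - ( -(if a - 1 - (α:ℤ) = 0 then Mc μ ((i:ℤ) - (a-1)) ((j:ℤ) - a) else 0)
          + (Hn n ((i:ℤ) - (a-1)) ((j:ℤ) - a) ((α:ℤ) - a)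
              - Hn n ((i:ℤ) - (a-1)) ((j:ℤ) - a) ((α:ℤ) - (a-1))))
      - ( -(if a - 1 - (α:ℤ) = 0 then Mc μ ((i:ℤ) - a) ((j:ℤ) - (a-1)) else 0)
          + (Hn n ((i:ℤ) - a) ((j:ℤ) - (a-1)) ((α:ℤ) - a)
              - Hn n ((i:ℤ) - a) ((j:ℤ) - (a-1)) ((α:ℤ) - (a-1))))
      + ( -(if a - 1 - (α:ℤ) = 0 then Mc μ ((i:ℤ) - (a-1)) ((j:ℤ) - (a-1)) else 0)
          + (Hn n ((i:ℤ) - (a-1)) ((j:ℤ) - (a-1)) ((α:ℤ) - a)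
              - Hn n ((i:ℤ) - (a-1)) ((j:ℤ) - (a-1)) ((α:ℤ) - (a-1))))) = 0 := by
  have hwit : ∀ z : ℤ, z < (α : ℤ) + 1 → ((i, j) ∈ μ ∨ z < (n.toFun (i, j) : ℤ)) :=
    fun z hz => Or.inr (by omega)
  set P : ℤ := (i : ℤ) - (a - 1) with hP
  set Q : ℤ := (j : ℤ) - (a - 1) with hQ
  rw [show ((i:ℤ) - a) = P - 1 from by rw [hP]; ring,
    show ((j:ℤ) - a) = Q - 1 from by rw [hQ]; ring]
  have hp : P ≤ (i : ℤ) := by rw [hP]; omega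
  have hq : Q ≤ (j : ℤ) := by rw [hQ]; omega
  rcases lt_trichotomy ((α : ℤ)) (a - 1) with hlt | heq | hgt
  · have hz1 : ∀ x y : ℤ, Hn n x y ((α:ℤ) - a) = 0 := fun x y => Hn_zneg n (by omega)
    have hz2 : ∀ x y : ℤ, Hn n x y ((α:ℤ) - (a-1)) = 0 := fun x y => Hn_zneg n (by omega)
    have h0 : ¬(a - 1 - (α:ℤ) = 0) := by omega
    have hind : ¬((((i:ℤ), (j:ℤ), (α:ℤ)) : ℤ × ℤ × ℤ) = (a-1, a-1, a-1)) := by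
      simp only [Prod.ext_iff]; omega
    rw [if_neg hind, if_neg h0, if_neg h0, if_neg h0, if_neg h0]
    simp only [hz1, hz2]
    ring
  · have h0 : a - 1 - (α:ℤ) = 0 := by omega
    have hiff : ((((i:ℤ), (j:ℤ), (α:ℤ)) : ℤ × ℤ × ℤ) = (a-1, a-1, a-1)) ↔ (P = 0 ∧ Q = 0) := by
      rw [hP, hQ]; simp only [Prod.ext_iff]; omega
    rw [if_congr hiff rfl rfl, if_pos h0, if_pos h0, if_pos h0, if_pos h0]
    have hz1 : ∀ x y : ℤ, Hn n x y ((α:ℤ) - a) = 0 := fun x y => Hn_zneg n (by omega)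
    simp only [hz1]
    rw [show ((α:ℤ) - (a-1)) = 0 from by omega]
    have hB := DDchi n 0 P Q i j (hwit 0 (by omega)) hp hq
    have hM1 := M_add_H n (le_refl (0:ℤ)) (P-1) (Q-1)
    have hM2 := M_add_H n (le_refl (0:ℤ)) P (Q-1)
    have hM3 := M_add_H n (le_refl (0:ℤ)) (P-1) Q
    have hM4 := M_add_H n (le_refl (0:ℤ)) P Q
    linear_combination hM1 - hM2 - hM3 + hM4 + hB
  · have h0 : ¬(a - 1 - (α:ℤ) = 0) := by omega
    have hind : ¬((((i:ℤ), (j:ℤ), (α:ℤ)) : ℤ × ℤ × ℤ) = (a-1, a-1, a-1)) := by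
      simp only [Prod.ext_iff]; omega
    rw [if_neg hind, if_neg h0, if_neg h0, if_neg h0, if_neg h0]
    have hBa := DDchi n ((α:ℤ) - a) P Q i j (hwit _ (by omega)) hp hq
    have hBb := DDchi n ((α:ℤ) - (a-1)) P Q i j (hwit _ (by omega)) hp hq
    have ha0 : (0:ℤ) ≤ (α:ℤ) - a := by omega
    have hb0 : (0:ℤ) ≤ (α:ℤ) - (a-1) := by omega
    have hM1a := M_add_H n ha0 (P-1) (Q-1)
    have hM2a := M_add_H n ha0 P (Q-1)
    have hM3a := M_add_H n ha0 (P-1) Q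
    have hM4a := M_add_H n ha0 P Q
    have hM1b := M_add_H n hb0 (P-1) (Q-1)
    have hM2b := M_add_H n hb0 P (Q-1)
    have hM3b := M_add_H n hb0 (P-1) Q
    have hM4b := M_add_H n hb0 P Q
    linear_combination (hM1b - hM2b - hM3b + hM4b) - (hM1a - hM2a - hM3a + hM4a) - hBa + hBb

lemma mainA (a : ℤ) (ha : 1 ≤ a) : (vDT n).coeff (a, a, a) = 0 := by
  rw [coeff_eq]
  rw [show Hn n (-a) (-a) (-a) = 0 from by
    unfold Hn; split_ifs with h
    · omega
    · rfl]
  rw [p2_pos_zero n (a, a, a) (by show (0:ℤ) < a; omega),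
    p2_pos_zero n (a-1, a, a) (by show (0:ℤ) < a; omega),
    p2_pos_zero n (a, a-1, a) (by show (0:ℤ) < a; omega),
    p2_pos_zero n (a-1, a-1, a) (by show (0:ℤ) < a; omega)]
  rw [p3_eqA, p3_eqA, p3_eqA, p3_eqA, p1_eqA, p1_eqA, p1_eqA, p1_eqA,
    p1_eqA, p1_eqA, p1_eqA, p1_eqA]
  rw [← sum_ind n (a-1) (a-1) (a-1)]
  simp only [← Finset.sum_sub_distrib, ← Finset.sum_add_distrib,
    zero_sub, ← Finset.sum_neg_distrib, neg_sub]
  trans (∑ c ∈ n.finite_support.toFinset, ∑ α ∈ Finset.range (n.toFun c),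
    ((-(if (((c.1:ℤ), (c.2:ℤ), (α:ℤ)) : ℤ × ℤ × ℤ) = (a-1, a-1, a-1) then (1:ℤ) else 0))
    - (( -(if a - 1 - (α:ℤ) = 0 then Mc μ ((c.1:ℤ) - a) ((c.2:ℤ) - a) else 0)
          + (Hn n ((c.1:ℤ) - a) ((c.2:ℤ) - a) ((α:ℤ) - a)
              - Hn n ((c.1:ℤ) - a) ((c.2:ℤ) - a) ((α:ℤ) - (a-1))))
      - ( -(if a - 1 - (α:ℤ) = 0 then Mc μ ((c.1:ℤ) - (a-1)) ((c.2:ℤ) - a) else 0)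
          + (Hn n ((c.1:ℤ) - (a-1)) ((c.2:ℤ) - a) ((α:ℤ) - a)
              - Hn n ((c.1:ℤ) - (a-1)) ((c.2:ℤ) - a) ((α:ℤ) - (a-1))))
      - ( -(if a - 1 - (α:ℤ) = 0 then Mc μ ((c.1:ℤ) - a) ((c.2:ℤ) - (a-1)) else 0)
          + (Hn n ((c.1:ℤ) - a) ((c.2:ℤ) - (a-1)) ((α:ℤ) - a)
              - Hn n ((c.1:ℤ) - a) ((c.2:ℤ) - (a-1)) ((α:ℤ) - (a-1))))
      + ( -(if a - 1 - (α:ℤ) = 0 then Mc μ ((c.1:ℤ) - (a-1)) ((c.2:ℤ) - (a-1)) else 0)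
          + (Hn n ((c.1:ℤ) - (a-1)) ((c.2:ℤ) - (a-1)) ((α:ℤ) - a)
              - Hn n ((c.1:ℤ) - (a-1)) ((c.2:ℤ) - (a-1)) ((α:ℤ) - (a-1)))))))
  · simp only [Finset.sum_sub_distrib, Finset.sum_add_distrib, Finset.sum_neg_distrib]
    ring
  · refine Finset.sum_eq_zero fun c hc => Finset.sum_eq_zero fun α hα => ?_
    exact keyA n a ha c.1 c.2 α (by
      rw [Finset.mem_range] at hα
      exact hα)

lemma keyB (a : ℤ) (ha : a ≤ 0) (i j α : ℕ) (hn : α < n.toFun (i, j)) :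
    (if (((i:ℤ), (j:ℤ), (α:ℤ)) : ℤ × ℤ × ℤ) = (-a, -a, -a) then (1:ℤ) else 0)
    - (( (if a + (α:ℤ) = 0 then Mc μ (a + (i:ℤ)) (a + (j:ℤ)) else 0)
          + (Hn n (a + (i:ℤ)) (a + (j:ℤ)) (a + (α:ℤ))
              - Hn n (a + (i:ℤ)) (a + (j:ℤ)) (a - 1 + (α:ℤ))))
      - ( (if a + (α:ℤ) = 0 then Mc μ (a - 1 + (i:ℤ)) (a + (j:ℤ)) else 0)
          + (Hn n (a - 1 + (i:ℤ)) (a + (j:ℤ)) (a + (α:ℤ))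
              - Hn n (a - 1 + (i:ℤ)) (a + (j:ℤ)) (a - 1 + (α:ℤ))))
      - ( (if a + (α:ℤ) = 0 then Mc μ (a + (i:ℤ)) (a - 1 + (j:ℤ)) else 0)
          + (Hn n (a + (i:ℤ)) (a - 1 + (j:ℤ)) (a + (α:ℤ))
              - Hn n (a + (i:ℤ)) (a - 1 + (j:ℤ)) (a - 1 + (α:ℤ))))
      + ( (if a + (α:ℤ) = 0 then Mc μ (a - 1 + (i:ℤ)) (a - 1 + (j:ℤ)) else 0)
          + (Hn n (a - 1 + (i:ℤ)) (a - 1 + (j:ℤ)) (a + (α:ℤ))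
              - Hn n (a - 1 + (i:ℤ)) (a - 1 + (j:ℤ)) (a - 1 + (α:ℤ))))) = 0 := by
  have hwit : ∀ z : ℤ, z < (α : ℤ) + 1 → ((i, j) ∈ μ ∨ z < (n.toFun (i, j) : ℤ)) :=
    fun z hz => Or.inr (by omega)
  set P : ℤ := a + (i : ℤ) with hP
  set Q : ℤ := a + (j : ℤ) with hQ
  rw [show (a - 1 + (i:ℤ)) = P - 1 from by rw [hP]; ring,
    show (a - 1 + (j:ℤ)) = Q - 1 from by rw [hQ]; ring]
  have hp : P ≤ (i : ℤ) := by rw [hP]; omega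
  have hq : Q ≤ (j : ℤ) := by rw [hQ]; omega
  rcases lt_trichotomy (a + (α : ℤ)) 0 with hlt | heq | hgt
  · have hz1 : ∀ x y : ℤ, Hn n x y (a + (α:ℤ)) = 0 := fun x y => Hn_zneg n (by omega)
    have hz2 : ∀ x y : ℤ, Hn n x y (a - 1 + (α:ℤ)) = 0 := fun x y => Hn_zneg n (by omega)
    have h0 : ¬(a + (α:ℤ) = 0) := by omega
    have hind : ¬((((i:ℤ), (j:ℤ), (α:ℤ)) : ℤ × ℤ × ℤ) = (-a, -a, -a)) := by
      simp only [Prod.ext_iff]; omega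
    rw [if_neg hind, if_neg h0, if_neg h0, if_neg h0, if_neg h0]
    simp only [hz1, hz2]
    ring
  · have hiff : ((((i:ℤ), (j:ℤ), (α:ℤ)) : ℤ × ℤ × ℤ) = (-a, -a, -a)) ↔ (P = 0 ∧ Q = 0) := by
      rw [hP, hQ]; simp only [Prod.ext_iff]; omega
    rw [if_congr hiff rfl rfl, if_pos heq, if_pos heq, if_pos heq, if_pos heq]
    have hz2 : ∀ x y : ℤ, Hn n x y (a - 1 + (α:ℤ)) = 0 := fun x y => Hn_zneg n (by omega)
    simp only [hz2]
    rw [show (a + (α:ℤ)) = 0 from heq]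
    have hB := DDchi n 0 P Q i j (hwit 0 (by omega)) hp hq
    have hMa := M_add_H n (le_refl (0:ℤ)) P Q
    have hMb := M_add_H n (le_refl (0:ℤ)) (P-1) Q
    have hMc := M_add_H n (le_refl (0:ℤ)) P (Q-1)
    have hMd := M_add_H n (le_refl (0:ℤ)) (P-1) (Q-1)
    linear_combination -hMa + hMb + hMc - hMd - hB
  · have h0 : ¬(a + (α:ℤ) = 0) := by omega
    have hind : ¬((((i:ℤ), (j:ℤ), (α:ℤ)) : ℤ × ℤ × ℤ) = (-a, -a, -a)) := by
      simp only [Prod.ext_iff]; omega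
    rw [if_neg hind, if_neg h0, if_neg h0, if_neg h0, if_neg h0]
    have hBb := DDchi n (a + (α:ℤ)) P Q i j (hwit _ (by omega)) hp hq
    have hBa := DDchi n (a - 1 + (α:ℤ)) P Q i j (hwit _ (by omega)) hp hq
    have hb0 : (0:ℤ) ≤ a + (α:ℤ) := by omega
    have ha0 : (0:ℤ) ≤ a - 1 + (α:ℤ) := by omega
    have hMab := M_add_H n hb0 P Q
    have hMbb := M_add_H n hb0 (P-1) Q
    have hMcb := M_add_H n hb0 P (Q-1)
    have hMdb := M_add_H n hb0 (P-1) (Q-1)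
    have hMaa := M_add_H n ha0 P Q
    have hMba := M_add_H n ha0 (P-1) Q
    have hMca := M_add_H n ha0 P (Q-1)
    have hMda := M_add_H n ha0 (P-1) (Q-1)
    linear_combination -(hMab - hMbb - hMcb + hMdb) + (hMaa - hMba - hMca + hMda) - hBb + hBa

lemma mainB (a : ℤ) (ha : a ≤ 0) : (vDT n).coeff (a, a, a) = 0 := by
  rw [coeff_eq]
  rw [show Hn n (a-1) (a-1) (a-1) = 0 from by
    unfold Hn; split_ifs with h
    · omega
    · rfl]
  rw [p3_neg_zero n (a, a, a-1) (by show a - 1 < (0:ℤ); omega),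
    p3_neg_zero n (a-1, a, a-1) (by show a - 1 < (0:ℤ); omega),
    p3_neg_zero n (a, a-1, a-1) (by show a - 1 < (0:ℤ); omega),
    p3_neg_zero n (a-1, a-1, a-1) (by show a - 1 < (0:ℤ); omega)]
  rw [p2_eqB, p2_eqB, p2_eqB, p2_eqB, p1_eqB, p1_eqB, p1_eqB, p1_eqB,
    p1_eqB, p1_eqB, p1_eqB, p1_eqB]
  rw [← sum_ind n (-a) (-a) (-a)]
  simp only [← Finset.sum_sub_distrib, ← Finset.sum_add_distrib,
    zero_sub, ← Finset.sum_neg_distrib, neg_sub]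
  trans (∑ c ∈ n.finite_support.toFinset, ∑ α ∈ Finset.range (n.toFun c),
    ((if (((c.1:ℤ), (c.2:ℤ), (α:ℤ)) : ℤ × ℤ × ℤ) = (-a, -a, -a) then (1:ℤ) else 0)
    - (( (if a + (α:ℤ) = 0 then Mc μ (a + (c.1:ℤ)) (a + (c.2:ℤ)) else 0)
          + (Hn n (a + (c.1:ℤ)) (a + (c.2:ℤ)) (a + (α:ℤ))
              - Hn n (a + (c.1:ℤ)) (a + (c.2:ℤ)) (a - 1 + (α:ℤ))))
      - ( (if a + (α:ℤ) = 0 then Mc μ (a - 1 + (c.1:ℤ)) (a + (c.2:ℤ)) else 0)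
          + (Hn n (a - 1 + (c.1:ℤ)) (a + (c.2:ℤ)) (a + (α:ℤ))
              - Hn n (a - 1 + (c.1:ℤ)) (a + (c.2:ℤ)) (a - 1 + (α:ℤ))))
      - ( (if a + (α:ℤ) = 0 then Mc μ (a + (c.1:ℤ)) (a - 1 + (c.2:ℤ)) else 0)
          + (Hn n (a + (c.1:ℤ)) (a - 1 + (c.2:ℤ)) (a + (α:ℤ))
              - Hn n (a + (c.1:ℤ)) (a - 1 + (c.2:ℤ)) (a - 1 + (α:ℤ))))
      + ( (if a + (α:ℤ) = 0 then Mc μ (a - 1 + (c.1:ℤ)) (a - 1 + (c.2:ℤ)) else 0)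
          + (Hn n (a - 1 + (c.1:ℤ)) (a - 1 + (c.2:ℤ)) (a + (α:ℤ))
              - Hn n (a - 1 + (c.1:ℤ)) (a - 1 + (c.2:ℤ)) (a - 1 + (α:ℤ)))))))
  · simp only [Finset.sum_sub_distrib, Finset.sum_add_distrib, Finset.sum_neg_distrib]
    ring
  · refine Finset.sum_eq_zero fun c hc => Finset.sum_eq_zero fun α hα => ?_
    exact keyB n a ha c.1 c.2 α (by
      rw [Finset.mem_range] at hα
      exact hα)

end Aux

theorem stmt12 (μ : YoungDiagram) (n : SkewPP μ) :
    (∀ a : ℤ, (vDT n).coeff (a, a, a) = 0) ∧ (vDT n).coeff (0, 0, 0) = 0 := by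
  have key : ∀ a : ℤ, (vDT n).coeff (a, a, a) = 0 := by
    intro a
    rcases le_or_gt 1 a with ha | ha
    · exact mainA n a ha
    · exact mainB n a (by omega)
  exact ⟨key, key 0⟩
end
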